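/- Let ψ be a solution of −ψ'' + Wψ = λψ on (0, l) with ‖W − λ‖_∞ ≤ K, and let S ⊂ [0, l] be an interval of positive length |S|. Then there exists a constant C₁ > 0, depending only on K, l, and |S| (explicitly one may take C₁ = e^{−C₄ l} |S| / l with C₄ = C₄(K)), such that ∫_S |ψ|² ≥ C₁ ∫_0^l |ψ|². -/

import Mathlib

/-!
For `ψ'' = (W - λ) ψ` the phase-space vector `(ψ, ψ')` satisfies
`‖(ψ, ψ')'‖ ≤ (1 + K) ‖(ψ, ψ')‖`, so by Gronwall its norm varies by at most a factor
`exp ((1 + K) l)` over `(0, l)`, and `∫₀ˡ |ψ|²` is controlled by `|ψ(x)|² + |ψ'(x)|²` at any one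
point `x ∈ S`. Such a point with `|ψ(x)|² + |ψ'(x)|² ≲ ∫_S |ψ|²` exists: in each outer third of
`S` pick a point where `|ψ|²` is at most three times its mean on `S`; their difference quotient
controls `ψ'` up to the oscillation of `ψ'` on `S`, which is at most
`K ∫_S |ψ| ≤ K |S|^{1/2} (∫_S |ψ|²)^{1/2}`.
-/

open MeasureTheory Set Real

section Gronwall

variable {E : Type*} [NormedAddCommGroup E] [NormedSpace ℝ E] {Y Y' : ℝ → E} {C x y : ℝ}

theorem norm_le_norm_mul_exp_of_norm_deriv_le (hxy : x ≤ y)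
    (hY : ∀ t ∈ Icc x y, HasDerivAt Y (Y' t) t) (hC : ∀ t ∈ Icc x y, ‖Y' t‖ ≤ C * ‖Y t‖) :
    ‖Y y‖ ≤ ‖Y x‖ * exp (C * (y - x)) := by
  have := norm_le_gronwallBound_of_norm_deriv_right_le (δ := ‖Y x‖) (ε := 0)
    (fun t ht => (hY t ht).continuousAt.continuousWithinAt)
    (fun t ht => (hY t (Ico_subset_Icc_self ht)).hasDerivWithinAt) le_rfl
    (fun t ht => by simpa using hC t (Ico_subset_Icc_self ht)) y (right_mem_Icc.2 hxy)
  rwa [gronwallBound_ε0] at this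

theorem norm_le_norm_mul_exp_abs_of_norm_deriv_le {s : Set ℝ} (hs : s.OrdConnected)
    (hY : ∀ t ∈ s, HasDerivAt Y (Y' t) t) (hC : ∀ t ∈ s, ‖Y' t‖ ≤ C * ‖Y t‖)
    (hx : x ∈ s) (hy : y ∈ s) : ‖Y y‖ ≤ ‖Y x‖ * exp (C * |y - x|) := by
  rcases le_total x y with hxy | hyx
  · rw [abs_of_nonneg (sub_nonneg.2 hxy)]
    exact norm_le_norm_mul_exp_of_norm_deriv_le hxy (fun t ht => hY t (hs.out hx hy ht))
      (fun t ht => hC t (hs.out hx hy ht))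
  · have hmem : ∀ t ∈ Icc (-x) (-y), -t ∈ s := fun t ht =>
      hs.out hy hx ⟨le_neg.1 ht.2, neg_le.1 ht.1⟩
    have := norm_le_norm_mul_exp_of_norm_deriv_le (Y := fun t => Y (-t))
      (Y' := fun t => -Y' (-t)) (neg_le_neg hyx)
      (fun t ht => by
        simpa [Function.comp_def] using (hY (-t) (hmem t ht)).scomp t (hasDerivAt_neg t))
      (fun t ht => by simpa using hC (-t) (hmem t ht))
    simpa [abs_of_nonpos (sub_nonpos.2 hyx), add_comm, ← sub_eq_add_neg] using this

end Gronwall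

theorem ContDiffOn.hasDerivAt_of_isOpen {E : Type*} [NormedAddCommGroup E] [NormedSpace ℝ E]
    {f : ℝ → E} {n : WithTop ℕ∞} {U : Set ℝ} {x : ℝ} (hf : ContDiffOn ℝ n f U) (hU : IsOpen U)
    (hn : n ≠ 0) (hx : x ∈ U) : HasDerivAt f (deriv f x) x :=
  ((hf.differentiableOn hn).differentiableAt (hU.mem_nhds hx)).hasDerivAt

theorem exists_mem_Ioo_mul_le_setIntegral {f : ℝ → ℝ} {t : Set ℝ} {c d : ℝ} (hcd : c < d)
    (hct : Ioo c d ⊆ t) (hf : IntegrableOn f t) (hf₀ : 0 ≤ f) :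
    ∃ x ∈ Ioo c d, (d - c) * f x ≤ ∫ x in t, f x := by
  have hvol : volume.real (Ioo c d) = d - c := Real.volume_real_Ioo_of_le hcd.le
  obtain ⟨x, hx, hfx⟩ := exists_le_setAverage (by simp [hcd]) measure_Ioo_lt_top.ne
    (hf.mono_set hct)
  refine ⟨x, hx, ?_⟩
  rw [setAverage_eq, hvol, smul_eq_mul, ← div_eq_inv_mul, le_div_iff₀ (sub_pos.2 hcd)] at hfx
  calc (d - c) * f x ≤ ∫ x in Ioo c d, f x := by linarith
    _ ≤ ∫ x in t, f x :=
      setIntegral_mono_set hf (.of_forall hf₀) hct.eventuallyLE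

theorem sq_setIntegral_le_measureReal_mul_setIntegral_sq {α : Type*} [MeasurableSpace α]
    {μ : Measure α} {f : α → ℝ} {t : Set α} (ht : μ t ≠ ⊤) (hf : IntegrableOn f t μ)
    (hf2 : IntegrableOn (fun x => f x ^ 2) t μ) :
    (∫ x in t, f x ∂μ) ^ 2 ≤ μ.real t * ∫ x in t, f x ^ 2 ∂μ := by
  rcases eq_or_ne (μ t) 0 with h0 | h0
  · simp [Measure.restrict_eq_zero.2 h0]
  have hpos : 0 < μ.real t := ENNReal.toReal_pos h0 ht
  have := (even_two.convexOn_pow (𝕜 := ℝ)).map_set_average_le (continuousOn_id.pow 2)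
    isClosed_univ h0 ht (by simp) hf hf2
  simp only [setAverage_eq, smul_eq_mul] at this
  rw [mul_pow, inv_pow, ← div_eq_inv_mul, ← div_eq_inv_mul, div_le_div_iff₀ (by positivity) hpos,
    sq (μ.real t), ← mul_assoc] at this
  exact le_of_mul_le_mul_right (by linarith) hpos

theorem sub_mul_norm_le_of_norm_deriv_sub_le {E : Type*} [NormedAddCommGroup E]
    [NormedSpace ℝ E] {f f' : ℝ → E} {M x y : ℝ} (hxy : x ≤ y)
    (hf : ∀ t ∈ Icc x y, HasDerivAt f (f' t) t) (hM : ∀ t ∈ Icc x y, ‖f' t - f' x‖ ≤ M) :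
    (y - x) * ‖f' x‖ ≤ ‖f x‖ + ‖f y‖ + M * (y - x) := by
  have hg := norm_image_sub_le_of_norm_deriv_le_segment' (f := fun t => f t - t • f' x)
    (fun t ht => ((hf t ht).sub ((hasDerivAt_id t).smul_const (f' x))).hasDerivWithinAt)
    (fun t ht => by simpa using hM t (Ico_subset_Icc_self ht)) y (right_mem_Icc.2 hxy)
  have hsplit : (y - x) • f' x = (f y - f x) - ((f y - y • f' x) - (f x - x • f' x)) := by
    rw [sub_smul]; abel
  calc (y - x) * ‖f' x‖ = ‖(y - x) • f' x‖ := by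
        rw [norm_smul, Real.norm_of_nonneg (sub_nonneg.2 hxy)]
    _ ≤ ‖f y - f x‖ + M * (y - x) := by rw [hsplit]; exact (norm_sub_le _ _).trans (by gcongr)
    _ ≤ ‖f x‖ + ‖f y‖ + M * (y - x) := by linarith [norm_sub_le (f y) (f x)]

section SecondOrderDifferentialInequality

variable {E : Type*} [NormedAddCommGroup E] [NormedSpace ℝ E] {ψ : ℝ → E} {K a b x y : ℝ}

theorem norm_prod_deriv_le_mul_exp (hK : 0 ≤ K) (hψ : ContDiffOn ℝ 2 ψ (Ioo a b))
    (hψ'' : ∀ t ∈ Ioo a b, ‖deriv (deriv ψ) t‖ ≤ K * ‖ψ t‖) (hx : x ∈ Ioo a b)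
    (hy : y ∈ Ioo a b) :
    ‖(ψ y, deriv ψ y)‖ ≤ ‖(ψ x, deriv ψ x)‖ * exp ((1 + K) * |y - x|) := by
  have hψ' : ContDiffOn ℝ 1 (deriv ψ) (Ioo a b) := hψ.deriv_of_isOpen isOpen_Ioo (by norm_num)
  refine norm_le_norm_mul_exp_abs_of_norm_deriv_le ordConnected_Ioo
    (fun t ht => (hψ.hasDerivAt_of_isOpen isOpen_Ioo two_ne_zero ht).prodMk
      (hψ'.hasDerivAt_of_isOpen isOpen_Ioo one_ne_zero ht)) (fun t ht => ?_) hx hy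
  have h₁ := le_max_left ‖ψ t‖ ‖deriv ψ t‖
  have h₂ := le_max_right ‖ψ t‖ ‖deriv ψ t‖
  rw [Prod.norm_def, Prod.norm_def, max_le_iff]
  constructor <;> nlinarith [hψ'' t ht, norm_nonneg (ψ t)]

theorem integral_norm_sq_le_mul_exp_mul_norm_prod_deriv_sq (hK : 0 ≤ K)
    (hψ : ContDiffOn ℝ 2 ψ (Ioo a b)) (hψ'' : ∀ t ∈ Ioo a b, ‖deriv (deriv ψ) t‖ ≤ K * ‖ψ t‖)
    (hx : x ∈ Ioo a b) :
    ∫ t in Icc a b, ‖ψ t‖ ^ 2 ≤ (b - a) * exp (2 * (1 + K) * (b - a)) * ‖(ψ x, deriv ψ x)‖ ^ 2 := by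
  have hbound : ∀ y ∈ Ioo a b,
      ‖‖ψ y‖ ^ 2‖ ≤ exp (2 * (1 + K) * (b - a)) * ‖(ψ x, deriv ψ x)‖ ^ 2 := by
    intro y hy
    have hdist : |y - x| ≤ b - a :=
      abs_sub_le_iff.2 ⟨by linarith [hy.2, hx.1], by linarith [hy.1, hx.2]⟩
    calc ‖‖ψ y‖ ^ 2‖ ≤ ‖(ψ y, deriv ψ y)‖ ^ 2 := by
          rw [norm_pow, norm_norm]; gcongr; exact norm_fst_le (ψ y, deriv ψ y)
      _ ≤ (‖(ψ x, deriv ψ x)‖ * exp ((1 + K) * (b - a))) ^ 2 := by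
          gcongr
          exact (norm_prod_deriv_le_mul_exp hK hψ hψ'' hx hy).trans (by gcongr)
      _ = exp (2 * (1 + K) * (b - a)) * ‖(ψ x, deriv ψ x)‖ ^ 2 := by
          rw [mul_pow, ← exp_nat_mul]; ring_nf
  have := norm_setIntegral_le_of_norm_le_const (μ := volume) measure_Ioo_lt_top hbound
  rw [Real.volume_real_Ioo_of_le (hx.1.trans hx.2).le] at this
  rw [integral_Icc_eq_integral_Ioo]
  linarith [le_abs_self (∫ t in Ioo a b, ‖ψ t‖ ^ 2), Real.norm_eq_abs (∫ t in Ioo a b, ‖ψ t‖ ^ 2)]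

variable [CompleteSpace E]

theorem norm_deriv_sub_deriv_le (hK : 0 ≤ K) (hψ : ContDiffOn ℝ 2 ψ (Icc a b))
    (hψ'' : ∀ t ∈ Ioo a b, ‖deriv (deriv ψ) t‖ ≤ K * ‖ψ t‖) (hx : x ∈ Ioo a b)
    (hy : y ∈ Ioo a b) (hxy : x ≤ y) :
    ‖deriv ψ y - deriv ψ x‖ ≤ K * ∫ t in Icc a b, ‖ψ t‖ := by
  have hsub : uIcc x y ⊆ Ioo a b := uIcc_of_le hxy ▸ ordConnected_Ioo.out hx hy
  have hψ' : ContDiffOn ℝ 1 (deriv ψ) (Ioo a b) :=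
    (hψ.mono Ioo_subset_Icc_self).deriv_of_isOpen isOpen_Ioo (by norm_num)
  have hint : IntegrableOn (fun t => K * ‖ψ t‖) (Icc a b) :=
    (continuousOn_const.mul hψ.continuousOn.norm).integrableOn_Icc
  have hψ''c : ContinuousOn (deriv (deriv ψ)) (uIcc x y) :=
    (hψ'.continuousOn_deriv_of_isOpen isOpen_Ioo le_rfl).mono hsub
  have hψc : ContinuousOn ψ (uIcc x y) := hψ.continuousOn.mono (hsub.trans Ioo_subset_Icc_self)
  rw [← intervalIntegral.integral_eq_sub_of_hasDerivAt
    (fun t ht => hψ'.hasDerivAt_of_isOpen isOpen_Ioo one_ne_zero (hsub ht))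
    hψ''c.intervalIntegrable]
  calc ‖∫ t in x..y, deriv (deriv ψ) t‖ ≤ ∫ t in x..y, ‖deriv (deriv ψ) t‖ :=
        intervalIntegral.norm_integral_le_integral_norm hxy
    _ ≤ ∫ t in x..y, K * ‖ψ t‖ := by
        refine intervalIntegral.integral_mono_on hxy hψ''c.norm.intervalIntegrable
          (continuousOn_const.mul hψc.norm).intervalIntegrable fun t ht => hψ'' t (hsub ?_)
        rwa [uIcc_of_le hxy]
    _ = ∫ t in Icc x y, K * ‖ψ t‖ := by
        rw [intervalIntegral.integral_of_le hxy, integral_Icc_eq_integral_Ioc]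
    _ ≤ ∫ t in Icc a b, K * ‖ψ t‖ :=
        setIntegral_mono_set hint (.of_forall fun t => by positivity)
          (Icc_subset_Icc hx.1.le hy.2.le).eventuallyLE
    _ = K * ∫ t in Icc a b, ‖ψ t‖ := integral_const_mul K _

theorem exists_mem_Ioo_norm_prod_deriv_sq_le (hK : 0 ≤ K) (hab : a < b)
    (hψ : ContDiffOn ℝ 2 ψ (Icc a b)) (hψ'' : ∀ t ∈ Ioo a b, ‖deriv (deriv ψ) t‖ ≤ K * ‖ψ t‖) :
    ∃ x ∈ Ioo a b, (b - a) ^ 3 * ‖(ψ x, deriv ψ x)‖ ^ 2 ≤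
      (3 * (b - a) ^ 2 + 162 + 3 * K ^ 2 * (b - a) ^ 4) * ∫ t in Icc a b, ‖ψ t‖ ^ 2 := by
  set s := b - a
  have hs : 0 < s := sub_pos.2 hab
  set T := ∫ t in Icc a b, ‖ψ t‖ ^ 2
  set V := ∫ t in Icc a b, ‖ψ t‖
  have hcont : ContinuousOn (fun t => ‖ψ t‖) (Icc a b) := hψ.continuousOn.norm
  have hT : IntegrableOn (fun t => ‖ψ t‖ ^ 2) (Icc a b) := (hcont.pow 2).integrableOn_Icc
  have hV : V ^ 2 ≤ s * T := by
    simpa [Real.volume_real_Icc_of_le hab.le] using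
      sq_setIntegral_le_measureReal_mul_setIntegral_sq measure_Icc_lt_top.ne
        hcont.integrableOn_Icc hT
  obtain ⟨x₁, hx₁, hψx₁⟩ := exists_mem_Ioo_mul_le_setIntegral (c := a) (d := a + s / 3)
    (by linarith) (Ioo_subset_Icc_self.trans (Icc_subset_Icc le_rfl (by linarith))) hT
    fun t => by positivity
  obtain ⟨x₂, hx₂, hψx₂⟩ := exists_mem_Ioo_mul_le_setIntegral (c := b - s / 3) (d := b)
    (by linarith) (Ioo_subset_Icc_self.trans (Icc_subset_Icc (by linarith) le_rfl)) hT
    fun t => by positivity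
  have hx₁' : x₁ ∈ Ioo a b := ⟨hx₁.1, by linarith [hx₁.2]⟩
  have hx₂' : x₂ ∈ Ioo a b := ⟨by linarith [hx₂.1], hx₂.2⟩
  have hx₁₂ : s / 3 ≤ x₂ - x₁ := by linarith [hx₁.2, hx₂.1]
  have hψ'x₁ := sub_mul_norm_le_of_norm_deriv_sub_le (M := K * V) (by linarith)
    (fun t ht => (hψ.mono Ioo_subset_Icc_self).hasDerivAt_of_isOpen isOpen_Ioo two_ne_zero
      (ordConnected_Ioo.out hx₁' hx₂' ht))
    (fun t ht => norm_deriv_sub_deriv_le hK hψ hψ'' hx₁' (ordConnected_Ioo.out hx₁' hx₂' ht) ht.1)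
  set p := ‖ψ x₁‖
  set q := ‖ψ x₂‖
  set w := ‖deriv ψ x₁‖
  have hp : s * p ^ 2 ≤ 3 * T := by linarith [hψx₁]
  have hq : s * q ^ 2 ≤ 3 * T := by linarith [hψx₂]
  have hw : s * w ≤ 3 * (p + q) + s * (K * V) := by
    rcases le_or_gt w (K * V) with h | h
    · nlinarith [norm_nonneg (ψ x₁), norm_nonneg (ψ x₂)]
    · nlinarith [mul_le_mul_of_nonneg_right hx₁₂ (sub_nonneg.2 h.le)]
  have hsw : (s * w) ^ 2 ≤ 3 * ((3 * p) ^ 2 + (3 * q) ^ 2 + (s * (K * V)) ^ 2) := by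
    nlinarith [pow_le_pow_left₀ (by positivity) hw 2, sq_nonneg (3 * p - 3 * q),
      sq_nonneg (3 * p - s * (K * V)), sq_nonneg (3 * q - s * (K * V))]
  have hT₀ : 0 ≤ T := setIntegral_nonneg measurableSet_Icc fun t _ => by positivity
  refine ⟨x₁, hx₁', ?_⟩
  rw [Prod.norm_def]
  rcases max_cases p w with ⟨h, -⟩ | ⟨h, -⟩ <;> rw [h]
  · nlinarith [mul_le_mul_of_nonneg_left hp (sq_nonneg s),
      mul_nonneg (by positivity : 0 ≤ 162 + 3 * K ^ 2 * s ^ 4) hT₀]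
  · nlinarith [mul_le_mul_of_nonneg_left hsw hs.le,
      mul_le_mul_of_nonneg_left hV (by positivity : 0 ≤ 3 * s ^ 3 * K ^ 2)]

end SecondOrderDifferentialInequality

theorem norm_le_of_neg_add_mul_eq_mul {u v : ℂ} {w lam K : ℝ} (h : -u + w * v = lam * v)
    (hw : |w - lam| ≤ K) : ‖u‖ ≤ K * ‖v‖ := by
  have hu : u = ((w - lam : ℝ) : ℂ) * v := by push_cast; linear_combination -h
  rw [hu, norm_mul, Complex.norm_real, Real.norm_eq_abs]
  gcongr

theorem unique_continuation_interval_general (K l s : ℝ) (hK : 0 ≤ K) (hl : 0 < l)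
    (hs : 0 < s) :
    ∃ C₁ : ℝ, 0 < C₁ ∧
      ∀ (lam a b : ℝ) (ψ : ℝ → ℂ) (W : ℝ → ℝ),
        0 ≤ a → b ≤ l → b - a = s →
        ContDiffOn ℝ 2 ψ (Icc 0 l) →
        Measurable W →
        (∀ x ∈ Icc 0 l, |W x - lam| ≤ K) →
        (∀ x ∈ Ioo 0 l, -(deriv (deriv ψ) x) + (W x : ℂ) * ψ x = (lam : ℂ) * ψ x) →
        C₁ * ∫ x in Icc 0 l, ‖ψ x‖ ^ 2 ≤ ∫ x in Icc a b, ‖ψ x‖ ^ 2 := by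
  refine ⟨s ^ 3 / (l * exp (2 * (1 + K) * l) * (3 * s ^ 2 + 162 + 3 * K ^ 2 * s ^ 4)),
    by positivity, ?_⟩
  intro lam a b ψ W ha hbl hba hψ _ hWK hode
  have hψ'' : ∀ x ∈ Ioo 0 l, ‖deriv (deriv ψ) x‖ ≤ K * ‖ψ x‖ := fun x hx =>
    norm_le_of_neg_add_mul_eq_mul (hode x hx) (hWK x (Ioo_subset_Icc_self hx))
  obtain ⟨x₀, hx₀, hS⟩ := exists_mem_Ioo_norm_prod_deriv_sq_le hK (by linarith)
    (hψ.mono (Icc_subset_Icc ha hbl)) fun t ht => hψ'' t (Ioo_subset_Ioo ha hbl ht)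
  have htotal := integral_norm_sq_le_mul_exp_mul_norm_prod_deriv_sq hK
    (hψ.mono Ioo_subset_Icc_self) hψ'' (Ioo_subset_Ioo ha hbl hx₀)
  rw [hba] at hS
  rw [sub_zero] at htotal
  rw [div_mul_eq_mul_div, div_le_iff₀ (by positivity)]
  calc s ^ 3 * ∫ x in Icc 0 l, ‖ψ x‖ ^ 2
      ≤ s ^ 3 * (l * exp (2 * (1 + K) * l) * ‖(ψ x₀, deriv ψ x₀)‖ ^ 2) := by gcongr
    _ = l * exp (2 * (1 + K) * l) * (s ^ 3 * ‖(ψ x₀, deriv ψ x₀)‖ ^ 2) := by ring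
    _ ≤ l * exp (2 * (1 + K) * l) * ((3 * s ^ 2 + 162 + 3 * K ^ 2 * s ^ 4) *
          ∫ x in Icc a b, ‖ψ x‖ ^ 2) := by gcongr
    _ = _ := by ring

/-- One-dimensional unique continuation estimate: if `ψ` solves
`-ψ'' + Wψ = λψ` on `(0,l)` with `‖W - λ‖_∞ ≤ K`, and `S = [a,b] ⊂ [0,l]` is an
interval of length `s = b - a > 0`, then `∫_S |ψ|² ≥ C₁ ∫_0^l |ψ|²` where
`C₁ > 0` depends only on `K`, `l` and `s`. -/
theorem unique_continuation_interval (K l s : ℝ) (hK : 0 ≤ K) (hl : 0 < l)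
    (hs : 0 < s) (hsl : s ≤ l) :
    ∃ C₁ : ℝ, 0 < C₁ ∧
      ∀ (lam a b : ℝ) (ψ : ℝ → ℂ) (W : ℝ → ℝ),
        0 ≤ a → b ≤ l → b - a = s →
        ContDiffOn ℝ 2 ψ (Icc 0 l) →
        Measurable W →
        (∀ x ∈ Icc 0 l, |W x - lam| ≤ K) →
        (∀ x ∈ Ioo 0 l, -(deriv (deriv ψ) x) + (W x : ℂ) * ψ x = (lam : ℂ) * ψ x) →
        C₁ * ∫ x in Icc 0 l, ‖ψ x‖ ^ 2 ≤ ∫ x in Icc a b, ‖ψ x‖ ^ 2 :=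
  unique_continuation_interval_general K l s hK hl hs
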